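/- arXiv:1607.04401 — 4 statements merged into one kernel-verified Lean document; each statement's English description precedes it below -/
import Mathlib

section
/- For integers p ≥ 3 and q ≥ 3, the equation cos²(π/p) + cos²(π/q) = 1 holds if and only if (p,q) ∈ {(4,4), (3,6), (6,3)}. -/
/-! On `[0, π/2]` cosine is nonnegative and injective, so `cos² a + cos² b = 1`, i.e.
`cos b = sin a = cos (π/2 - a)`, means `a + b = π/2`. For `a = π/p`, `b = π/q` this is
`1/p + 1/q = 1/2`, i.e. `(p - 2)(q - 2) = 4`, whose positive solutions are read off. -/

open Real

theorem cos_sq_add_cos_sq_eq_one_iff {a b : ℝ} (ha : a ∈ Set.Icc 0 (π / 2))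
    (hb : b ∈ Set.Icc 0 (π / 2)) : cos a ^ 2 + cos b ^ 2 = 1 ↔ a + b = π / 2 := by
  obtain ⟨ha₀, ha₁⟩ := ha
  obtain ⟨hb₀, hb₁⟩ := hb
  have hcos_b : 0 ≤ cos b := cos_nonneg_of_mem_Icc ⟨by linarith, by linarith⟩
  have hcos_a' : 0 ≤ cos (π / 2 - a) := cos_nonneg_of_mem_Icc ⟨by linarith, by linarith⟩
  calc cos a ^ 2 + cos b ^ 2 = 1 ↔ cos b ^ 2 = cos (π / 2 - a) ^ 2 := by
        rw [cos_pi_div_two_sub, ← sin_sq_add_cos_sq a]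
        constructor <;> intro h <;> linarith
    _ ↔ cos b = cos (π / 2 - a) := sq_eq_sq₀ hcos_b hcos_a'
    _ ↔ b = π / 2 - a := injOn_cos.eq_iff ⟨hb₀, by linarith⟩ ⟨by linarith, by linarith⟩
    _ ↔ a + b = π / 2 := by constructor <;> intro h <;> linarith

theorem pi_div_add_pi_div_eq_pi_div_two_iff {x y : ℝ} (hx : x ≠ 0) (hy : y ≠ 0) :
    π / x + π / y = π / 2 ↔ x * y = 2 * (x + y) := by
  rw [div_add_div _ _ hx hy, div_eq_div_iff (mul_ne_zero hx hy) two_ne_zero]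
  constructor
  · intro h
    apply mul_left_cancel₀ pi_ne_zero
    linarith
  · intro h
    rw [h]
    ring

theorem Nat.mul_eq_two_mul_add_iff {p q : ℕ} (hp : 0 < p) (hq : 0 < q) :
    p * q = 2 * (p + q) ↔ (p, q) = (4, 4) ∨ (p, q) = (3, 6) ∨ (p, q) = (6, 3) := by
  constructor
  · intro h
    have hp₃ : 3 ≤ p := by nlinarith
    have hq₃ : 3 ≤ q := by nlinarith
    have hp₆ : p ≤ 6 := by nlinarith
    simp only [Prod.mk.injEq]
    interval_cases p <;> omega
  · rintro (h | h | h) <;> simp_all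

theorem prism_tiling_equation (p q : ℕ) (hp : 3 ≤ p) (hq : 3 ≤ q) :
    (Real.cos (π / p)) ^ 2 + (Real.cos (π / q)) ^ 2 = 1 ↔
      (p, q) = (4, 4) ∨ (p, q) = (3, 6) ∨ (p, q) = (6, 3) := by
  have pi_div_mem {n : ℕ} (hn : 3 ≤ n) : π / n ∈ Set.Icc 0 (π / 2) :=
    ⟨by positivity, div_le_div_of_nonneg_left pi_pos.le two_pos (by exact_mod_cast (by omega : 2 ≤ n))⟩
  rw [cos_sq_add_cos_sq_eq_one_iff (pi_div_mem hp) (pi_div_mem hq),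
    pi_div_add_pi_div_eq_pi_div_two_iff (by positivity) (by positivity),
    ← Nat.mul_eq_two_mul_add_iff (by omega) (by omega)]
  exact_mod_cast Iff.rfl
end

section
/- The map M: ℝ³ → ℝ³ given by (x,y,z) ↦ (x, y, z − xy/2) conjugates the Nil rotation r(O,ω): (x,y,z) ↦ (x cos ω − y sin ω, x sin ω + y cos ω, z − xy/2 + (x²−y²) sin(2ω)/4 + xy cos(2ω)/2) to the Euclidean rotation about the z-axis by angle ω; that is, M ∘ r(O,ω) ∘ M⁻¹ = R_z(ω) where R_z(ω)(x,y,z) = (x cos ω − y sin ω, x sin ω + y cos ω, z). -/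
/-!
Conjugating by `M` changes only the third coordinate, by `-xy/2` before and after the planar
rotation. The correction terms of the Nil rotation are exactly half the product of the rotated
coordinates, by the double-angle formulas, so they cancel against the final `-x'y'/2`.
-/

open Real

/-- The Nil rotation about the `z`-axis through angle `ω` (equation (2.4)). -/
noncomputable def nilRot (ω : ℝ) : ℝ × ℝ × ℝ → ℝ × ℝ × ℝ :=
  fun p =>
    (p.1 * Real.cos ω - p.2.1 * Real.sin ω,
     p.1 * Real.sin ω + p.2.1 * Real.cos ω,
     p.2.2 - p.1 * p.2.1 / 2 + (p.1 ^ 2 - p.2.1 ^ 2) * Real.sin (2 * ω) / 4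
       + p.1 * p.2.1 * Real.cos (2 * ω) / 2)

/-- The quadratic mapping `M` of equation (2.5). -/
noncomputable def quadM : ℝ × ℝ × ℝ → ℝ × ℝ × ℝ :=
  fun p => (p.1, p.2.1, p.2.2 - p.1 * p.2.1 / 2)

/-- The inverse of the quadratic mapping `M`. -/
noncomputable def quadMinv : ℝ × ℝ × ℝ → ℝ × ℝ × ℝ :=
  fun p => (p.1, p.2.1, p.2.2 + p.1 * p.2.1 / 2)

/-- The Euclidean rotation about the `z`-axis through angle `ω`. -/
noncomputable def euclRot (ω : ℝ) : ℝ × ℝ × ℝ → ℝ × ℝ × ℝ :=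
  fun p =>
    (p.1 * Real.cos ω - p.2.1 * Real.sin ω,
     p.1 * Real.sin ω + p.2.1 * Real.cos ω, p.2.2)

theorem rotate_fst_mul_rotate_snd (x y ω : ℝ) :
    (x * cos ω - y * sin ω) * (x * sin ω + y * cos ω) =
      (x ^ 2 - y ^ 2) * sin (2 * ω) / 2 + x * y * cos (2 * ω) := by
  rw [sin_two_mul, cos_two_mul']
  ring

theorem quadM_conj_nilRot (ω : ℝ) :
    quadM ∘ nilRot ω ∘ quadMinv = euclRot ω := by
  funext ⟨x, y, z⟩
  simp only [Function.comp_apply, quadM, quadMinv, nilRot, euclRot, Prod.mk.injEq, true_and]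
  linear_combination -rotate_fst_mul_rotate_snd x y ω / 2
end

section
/- The Nil rotation r(O,ω) about the z-axis by angle ω, defined by (x,y,z) ↦ (x cos ω − y sin ω, x sin ω + y cos ω, z − xy/2 + (x²−y²) sin(2ω)/4 + xy cos(2ω)/2), satisfies r(O,ω₁) ∘ r(O,ω₂) = r(O, ω₁+ω₂); in particular r(O,2π/p) has order p for every integer p ≥ 1. -/
/-!
In the plane `nilRot ω` is the Euclidean rotation by `ω`, and it shears the fibre coordinate by a
quadratic form in `(x, y)` whose coefficients are trigonometric in `2ω`; the angle-addition and
double-angle formulas make the composite of two such shears the shear of the summed angle. So the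
iterates of `nilRot (2π/p)` are the `nilRot (2πk/p)`, and such a map is the identity only when
`cos (2πk/p) = 1`, as the first coordinate of the image of `(1, 0, 0)` shows.
-/

open Real

theorem nilRot_comp (ω₁ ω₂ : ℝ) : nilRot ω₁ ∘ nilRot ω₂ = nilRot (ω₁ + ω₂) := by
  funext p
  simp only [nilRot, Function.comp_apply, Prod.mk.injEq, mul_add, cos_add, sin_add,
    sin_two_mul, cos_two_mul']
  refine ⟨by ring, by ring, by ring⟩

theorem nilRot_eq_id_iff (θ : ℝ) : nilRot θ = id ↔ cos θ = 1 := by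
  constructor
  · intro h
    simpa [nilRot] using congrArg (fun f => (f (1, 0, 0)).1) h
  · intro hcos
    have hsin : sin θ = 0 := by
      have := cos_sq_add_sin_sq θ
      rw [hcos] at this
      exact pow_eq_zero_iff two_ne_zero |>.mp (by linarith)
    funext p
    norm_num [nilRot, sin_two_mul, cos_two_mul, hcos, hsin]

theorem nilRot_zero : nilRot 0 = id :=
  (nilRot_eq_id_iff 0).mpr cos_zero

theorem nilRot_iterate (ω : ℝ) (k : ℕ) : (nilRot ω)^[k] = nilRot (k * ω) := by
  induction k with
  | zero => simp [nilRot_zero]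
  | succ n ih =>
    rw [Function.iterate_succ', ih, nilRot_comp]
    congr 1
    push_cast
    ring

theorem nilRot_add_and_order :
    (∀ ω₁ ω₂ : ℝ, nilRot ω₁ ∘ nilRot ω₂ = nilRot (ω₁ + ω₂)) ∧
    (∀ p : ℕ, 1 ≤ p →
      (nilRot (2 * π / p))^[p] = id ∧
      ∀ k : ℕ, 0 < k → k < p → (nilRot (2 * π / p))^[k] ≠ id) := by
  refine ⟨nilRot_comp, fun p hp => ⟨?_, fun k hk hkp => ?_⟩⟩
  · have hp0 : (p : ℝ) ≠ 0 := by positivity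
    rw [nilRot_iterate, mul_div_cancel₀ _ hp0, nilRot_eq_id_iff, cos_two_pi]
  · rw [nilRot_iterate, Ne, nilRot_eq_id_iff]
    have hp0 : (0 : ℝ) < p := by positivity
    have hθpos : 0 < (k : ℝ) * (2 * π / p) := by positivity
    have hθlt : (k : ℝ) * (2 * π / p) < 2 * π := by
      rw [mul_div_assoc', div_lt_iff₀ hp0, mul_comm]
      gcongr
    rw [cos_eq_one_iff_of_lt_of_lt (by linarith) hθlt]
    exact hθpos.ne'
end

section
/- For integers p, q ≥ 3 with (p,q) ∉ {(3,6),(4,4),(6,3)}, we have cos²(π/p) + cos²(π/q) ≠ 1; moreover if p ≥ 7 and q ≥ 3 then cos²(π/p) + cos²(π/q) > 1, and if p = 3 and q ≥ 7 then cos²(π/3) + cos²(π/q) > 1. -/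
/-! For `n ≥ 2` the angle `π / n` lies in `(0, π / 2]`, where `cos` is nonnegative and decreasing, so
`n ↦ cos² (π / n)` is strictly increasing. With `cos² (π / 3) = 1/4`, `cos² (π / 4) = 1/2` and
`cos² (π / 6) = 3/4`, fixing `p` determines `cos² (π / q) = 1 - cos² (π / p)`, hence `q` itself:
`q = 6, 4, 3` for `p = 3, 4, 6`; for `p = 5` the value falls strictly between those at `3` and `4`;
and for `p ≥ 7` the sum already exceeds `3/4 + 1/4`. -/

open Real Set

lemma strictMonoOn_sq_cos_pi_div : StrictMonoOn (fun n : ℕ => cos (π / n) ^ 2) (Ici 2) := by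
  intro m (hm : 2 ≤ m) n (hn : 2 ≤ n) hmn
  have hm' : (2 : ℝ) ≤ m := by exact_mod_cast hm
  have hmn' : (m : ℝ) < n := by exact_mod_cast hmn
  have hangle : π / m ≤ π / 2 := div_le_div_of_nonneg_left pi_pos.le two_pos hm'
  have hcos_nonneg : 0 ≤ cos (π / m) :=
    cos_nonneg_of_mem_Icc ⟨by linarith [pi_pos, div_nonneg pi_pos.le (zero_le_two.trans hm')],
      hangle.trans (by linarith [pi_pos])⟩
  have hcos_lt : cos (π / m) < cos (π / n) :=
    cos_lt_cos_of_nonneg_of_le_pi (by positivity) (hangle.trans (by linarith [pi_pos]))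
      (div_lt_div_of_pos_left pi_pos (by positivity) hmn')
  exact pow_lt_pow_left₀ hcos_lt hcos_nonneg two_ne_zero

lemma sq_cos_pi_div_three : cos (π / 3) ^ 2 = 1 / 4 := by
  rw [cos_pi_div_three]; norm_num

lemma sq_cos_pi_div_four : cos (π / 4) ^ 2 = 1 / 2 := by
  rw [cos_pi_div_four, div_pow, sq_sqrt zero_le_two]; norm_num

lemma one_lt_sq_cos_pi_div_add_sq_cos_pi_div {p q : ℕ} (hp : 7 ≤ p) (hq : 3 ≤ q) :
    1 < cos (π / p) ^ 2 + cos (π / q) ^ 2 := by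
  have h6p : cos (π / 6) ^ 2 < cos (π / p) ^ 2 := by
    exact_mod_cast strictMonoOn_sq_cos_pi_div (by norm_num : 6 ∈ Ici 2)
      (mem_Ici.mpr (by omega)) (by omega : 6 < p)
  have h3q : cos (π / 3) ^ 2 ≤ cos (π / q) ^ 2 := by
    exact_mod_cast strictMonoOn_sq_cos_pi_div.monotoneOn (by norm_num : 3 ∈ Ici 2)
      (mem_Ici.mpr (by omega)) hq
  linarith [sq_cos_pi_div_six, sq_cos_pi_div_three]

theorem prism_tiling_nonexistence :
    (∀ p q : ℕ, 3 ≤ p → 3 ≤ q →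
      ¬((p, q) = (3, 6) ∨ (p, q) = (4, 4) ∨ (p, q) = (6, 3)) →
      Real.cos (π / p) ^ 2 + Real.cos (π / q) ^ 2 ≠ 1) ∧
    (∀ p q : ℕ, 7 ≤ p → 3 ≤ q →
      1 < Real.cos (π / p) ^ 2 + Real.cos (π / q) ^ 2) ∧
    (∀ q : ℕ, 7 ≤ q →
      1 < Real.cos (π / 3) ^ 2 + Real.cos (π / q) ^ 2) := by
  refine ⟨?_, fun p q => one_lt_sq_cos_pi_div_add_sq_cos_pi_div,
    fun q hq => by simpa [add_comm] using one_lt_sq_cos_pi_div_add_sq_cos_pi_div hq le_rfl⟩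
  intro p q hp hq hne heq
  set c : ℕ → ℝ := fun n => cos (π / n) ^ 2 with hc_def
  have hc : StrictMonoOn c (Ici 2) := strictMonoOn_sq_cos_pi_div
  have hq2 : q ∈ Ici 2 := mem_Ici.mpr (by omega)
  have hcq : c q = 1 - c p := by simp only [hc_def]; linarith
  have hc3 : c 3 = 1 / 4 := by simpa [hc_def] using sq_cos_pi_div_three
  have hc4 : c 4 = 1 / 2 := by simpa [hc_def] using sq_cos_pi_div_four
  have hc6 : c 6 = 3 / 4 := by simpa [hc_def] using sq_cos_pi_div_six
  by_cases hp7 : 7 ≤ p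
  · exact (one_lt_sq_cos_pi_div_add_sq_cos_pi_div hp7 hq).ne' heq
  interval_cases p
  · have : q = 6 := hc.injOn hq2 (by norm_num) (by linarith)
    exact hne (by simp [this])
  · have : q = 4 := hc.injOn hq2 (by norm_num) (by linarith)
    exact hne (by simp [this])
  · have h45 : c 4 < c 5 := hc (by norm_num) (by norm_num) (by norm_num)
    have h56 : c 5 < c 6 := hc (by norm_num) (by norm_num) (by norm_num)
    have h3q : 3 < q := (hc.lt_iff_lt (by norm_num) hq2).mp (by linarith)
    have hq4 : q < 4 := (hc.lt_iff_lt hq2 (by norm_num)).mp (by linarith)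
    omega
  · have : q = 3 := hc.injOn hq2 (by norm_num) (by linarith)
    exact hne (by simp [this])
end
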